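/- Every derivation of the extended Schrödinger-Virasoro Lie algebra sv~ is an inner derivation, i.e., H^1(sv~, sv~) = 0. -/

import Mathlib

/-- Index type for the basis of the extended Schrödinger-Virasoro Lie algebra.
`Y n` stands for the generator `Y_{n+1/2}`. -/
inductive SVIdx : Type
  | L : ℤ → SVIdx
  | M : ℤ → SVIdx
  | N : ℤ → SVIdx
  | Y : ℤ → SVIdx

/-- A complex Lie algebra `g` is (a copy of) the extended Schrödinger-Virasoro
Lie algebra if it has a basis indexed by `SVIdx` whose brackets are given by the
structure constants of `sv~`. -/
structure ExtSV (g : Type*) [LieRing g] [LieAlgebra ℂ g] where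
  b : Module.Basis SVIdx ℂ g
  LL : ∀ m n : ℤ, ⁅b (SVIdx.L m), b (SVIdx.L n)⁆ = ((n : ℂ) - (m : ℂ)) • b (SVIdx.L (m + n))
  MM : ∀ m n : ℤ, ⁅b (SVIdx.M m), b (SVIdx.M n)⁆ = 0
  NN : ∀ m n : ℤ, ⁅b (SVIdx.N m), b (SVIdx.N n)⁆ = 0
  YY : ∀ m n : ℤ, ⁅b (SVIdx.Y m), b (SVIdx.Y n)⁆ = ((m : ℂ) - (n : ℂ)) • b (SVIdx.M (m + n + 1))
  LM : ∀ m n : ℤ, ⁅b (SVIdx.L m), b (SVIdx.M n)⁆ = (n : ℂ) • b (SVIdx.M (m + n))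
  LN : ∀ m n : ℤ, ⁅b (SVIdx.L m), b (SVIdx.N n)⁆ = (n : ℂ) • b (SVIdx.N (m + n))
  LY : ∀ m n : ℤ, ⁅b (SVIdx.L m), b (SVIdx.Y n)⁆ =
      ((n : ℂ) + (1 - (m : ℂ)) / 2) • b (SVIdx.Y (m + n))
  NM : ∀ m n : ℤ, ⁅b (SVIdx.N m), b (SVIdx.M n)⁆ = (2 : ℂ) • b (SVIdx.M (m + n))
  NY : ∀ m n : ℤ, ⁅b (SVIdx.N m), b (SVIdx.Y n)⁆ = b (SVIdx.Y (m + n))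
  MY : ∀ m n : ℤ, ⁅b (SVIdx.M m), b (SVIdx.Y n)⁆ = 0

/-!
`ad L₀` is diagonal in the standard basis, with eigenvalue `n` on `L_n, M_n, N_n` and `n + 1/2`
on `Y_{n+1/2}`. Subtracting a suitable inner derivation from `D` removes the components of `D L₀`
of nonzero degree, and then the Leibniz rule on `[L₀, L₁]`, `[L₀, M₁]`, `[L₀, N₁]` forces
`D L₀ = 0`. A derivation killing `L₀` commutes with `ad L₀`, so it preserves each eigenspace
(spanned by `L_n, M_n, N_n`, resp. by `Y_{n+1/2}`). The Leibniz rule on a handful of brackets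
pins down its entries on these eigenspaces: it equals `ad (a L₀ - (c/2) M₀ + (b/2) N₀)`, where
`a`, `b`, `c` are the coefficients of `L₁` in its value on `L₁`, of `M₀` in its value on `M₀` and
of `M₀` in its value on `N₀`.
-/

namespace Module.Basis

variable {ι R M : Type*} [CommRing R] [AddCommGroup M] [Module R M]

theorem sum_repr_smul_of_repr_eq_zero (b : Basis ι R M) {v : M} {s : Finset ι}
    (hs : ∀ j ∉ s, b.repr v j = 0) : ∑ i ∈ s, b.repr v i • b i = v := by
  conv_rhs => rw [← b.linearCombination_repr v]
  rw [Finsupp.linearCombination_apply, Finsupp.sum_of_support_subset _ _ _ (by simp)]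
  intro j hj
  by_contra hjs
  exact Finsupp.mem_support_iff.mp hj (hs j hjs)

theorem repr_constr_smul (b : Basis ι R M) (c : ι → R) (v : M) (j : ι) :
    b.repr (b.constr R (fun i => c i • b i) v) j = c j * b.repr v j := by
  have hmaps : Finsupp.lapply j ∘ₗ b.repr.toLinearMap ∘ₗ b.constr R (fun i => c i • b i)
      = c j • (Finsupp.lapply j ∘ₗ b.repr.toLinearMap) := by
    refine b.ext fun i => ?_
    by_cases hij : i = j
    · subst hij; simp
    · simp [hij]
  simpa using LinearMap.congr_fun hmaps v

end Module.Basis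

section DiagonalAction

open Module

variable {ι K L : Type*} [LieRing L]

section CommRing

variable [CommRing K] [LieAlgebra K L] {b : Basis ι K L} {x : L} {c : ι → K}

theorem Module.Basis.repr_lie_of_lie_eq_smul
    (hx : ∀ i, ⁅x, b i⁆ = c i • b i) (v : L) (j : ι) :
    b.repr ⁅x, v⁆ j = c j * b.repr v j := by
  have had : (LieAlgebra.ad K L x : L →ₗ[K] L) = b.constr K fun i => c i • b i :=
    b.ext fun i => by rw [LieAlgebra.ad_apply, Basis.constr_basis, hx]
  rw [← b.repr_constr_smul, ← had, LieAlgebra.ad_apply]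

theorem LieDerivation.repr_lie_apply_of_lie_eq_smul
    (hx : ∀ i, ⁅x, b i⁆ = c i • b i) (D : LieDerivation K L L) (i j : ι) :
    b.repr ⁅D x, b i⁆ j = (c i - c j) * b.repr (D (b i)) j := by
  have hD : ⁅D x, b i⁆ = c i • D (b i) - ⁅x, D (b i)⁆ := by
    rw [eq_sub_iff_add_eq, add_comm, ← D.apply_lie_eq_add, hx, map_smul]
  rw [hD, map_sub, Finsupp.sub_apply, map_smul, Finsupp.smul_apply,
    b.repr_lie_of_lie_eq_smul hx, smul_eq_mul, sub_mul]

theorem LieDerivation.repr_apply_eq_zero_of_lie_eq_smul [IsDomain K]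
    (hx : ∀ i, ⁅x, b i⁆ = c i • b i) (D : LieDerivation K L L) (hDx : D x = 0) {i j : ι}
    (hij : c i ≠ c j) : b.repr (D (b i)) j = 0 := by
  have h0 := D.repr_lie_apply_of_lie_eq_smul hx i j
  rw [hDx, zero_lie, map_zero, Finsupp.zero_apply, eq_comm] at h0
  exact (mul_eq_zero.mp h0).resolve_left (sub_ne_zero.mpr hij)

end CommRing

theorem Module.Basis.exists_repr_lie_eq_of_lie_eq_smul [Field K] [LieAlgebra K L]
    {b : Basis ι K L} {x : L} {c : ι → K} (hx : ∀ i, ⁅x, b i⁆ = c i • b i) (u : L) :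
    ∃ w : L, ∀ j, c j ≠ 0 → b.repr ⁅x, w⁆ j = b.repr u j :=
  ⟨b.constr K (fun i => (c i)⁻¹ • b i) u, fun j hj => by
    rw [b.repr_lie_of_lie_eq_smul hx, b.repr_constr_smul, mul_inv_cancel_left₀ hj]⟩

end DiagonalAction

namespace SVIdx

def twiceDeg : SVIdx → ℤ
  | L n | M n | N n => 2 * n
  | Y n => 2 * n + 1

noncomputable def deg (i : SVIdx) : ℂ := (i.twiceDeg : ℂ) / 2

theorem deg_eq_deg_iff {i j : SVIdx} : i.deg = j.deg ↔ i.twiceDeg = j.twiceDeg := by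
  simp [deg]

theorem twiceDeg_eq_even_iff {j : SVIdx} {n : ℤ} :
    j.twiceDeg = 2 * n ↔ j = L n ∨ j = M n ∨ j = N n := by
  cases j <;> simp [twiceDeg]
  omega

theorem twiceDeg_eq_odd_iff {j : SVIdx} {n : ℤ} : j.twiceDeg = 2 * n + 1 ↔ j = Y n := by
  cases j <;> simp [twiceDeg] <;> omega

end SVIdx

namespace ExtSV

open SVIdx

attribute [simp] LL MM NN YY LM LN LY NM NY MY

variable {g : Type*} [LieRing g] [LieAlgebra ℂ g] (h : ExtSV g)

@[simp]
theorem ML (m n : ℤ) : ⁅h.b (M m), h.b (L n)⁆ = (-(m : ℂ)) • h.b (M (m + n)) := by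
  rw [← lie_skew, h.LM n m, add_comm n m, neg_smul]

@[simp]
theorem NL (m n : ℤ) : ⁅h.b (N m), h.b (L n)⁆ = (-(m : ℂ)) • h.b (N (m + n)) := by
  rw [← lie_skew, h.LN n m, add_comm n m, neg_smul]

@[simp]
theorem MN (m n : ℤ) : ⁅h.b (M m), h.b (N n)⁆ = (-2 : ℂ) • h.b (M (m + n)) := by
  rw [← lie_skew, h.NM n m, add_comm n m, neg_smul]

theorem lie_L_zero (i : SVIdx) : ⁅h.b (L 0), h.b i⁆ = i.deg • h.b i := by
  cases i <;> simp only [LL, LM, LN, LY, deg, twiceDeg, zero_add] <;> congr 1 <;> push_cast <;> ring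

theorem derivation_apply_L_zero_eq_zero (E : LieDerivation ℂ g g)
    (hE : ∀ j : SVIdx, j.deg ≠ 0 → h.b.repr (E (h.b (L 0))) j = 0) : E (h.b (L 0)) = 0 := by
  classical
  have hsum := h.b.sum_repr_smul_of_repr_eq_zero (s := {L 0, M 0, N 0}) fun j hj =>
    hE j fun h0 => by
      have h2 : j.twiceDeg = 2 * 0 := by simpa [deg] using h0
      rcases twiceDeg_eq_even_iff.mp h2 with rfl | rfl | rfl <;> simp at hj
  have key : ∀ i j : SVIdx, i.deg = j.deg → h.b.repr ⁅E (h.b (L 0)), h.b i⁆ j = 0 :=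
    fun i j hij => by rw [E.repr_lie_apply_of_lie_eq_smul h.lie_L_zero, hij, sub_self, zero_mul]
  have hL := key (L 1) (L 1) rfl
  have hM := key (M 1) (M 1) rfl
  have hN := key (N 1) (M 1) rfl
  rw [← hsum] at hL hM hN ⊢
  simp [add_lie] at hL hM hN
  have hN0 : h.b.repr (E (h.b (L 0))) (N 0) = 0 := by linear_combination (hM - hL) / 2
  simp [hL, hN, hN0]

theorem repr_derivation_apply_eq_zero {E : LieDerivation ℂ g g} (hE : E (h.b (L 0)) = 0)
    {i j : SVIdx} (hij : i.twiceDeg ≠ j.twiceDeg) : h.b.repr (E (h.b i)) j = 0 :=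
  E.repr_apply_eq_zero_of_lie_eq_smul h.lie_L_zero hE (deg_eq_deg_iff.not.mpr hij)

theorem derivation_apply_eq_of_twiceDeg_eq_even {E : LieDerivation ℂ g g}
    (hE : E (h.b (L 0)) = 0) {i : SVIdx} {n : ℤ} (hi : i.twiceDeg = 2 * n) :
    E (h.b i) = h.b.repr (E (h.b i)) (L n) • h.b (L n) + h.b.repr (E (h.b i)) (M n) • h.b (M n)
      + h.b.repr (E (h.b i)) (N n) • h.b (N n) := by
  classical
  rw [← h.b.sum_repr_smul_of_repr_eq_zero (s := {L n, M n, N n}) fun j hj =>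
    h.repr_derivation_apply_eq_zero hE fun hij => by
      rcases twiceDeg_eq_even_iff.mp (hij.symm.trans hi) with rfl | rfl | rfl <;> simp at hj]
  simp [add_assoc]

theorem derivation_apply_Y {E : LieDerivation ℂ g g} (hE : E (h.b (L 0)) = 0) (n : ℤ) :
    E (h.b (Y n)) = h.b.repr (E (h.b (Y n))) (Y n) • h.b (Y n) := by
  classical
  rw [← h.b.sum_repr_smul_of_repr_eq_zero (s := {Y n}) fun j hj =>
    h.repr_derivation_apply_eq_zero hE fun hij => by
      simp [twiceDeg_eq_odd_iff.mp hij.symm] at hj]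
  simp

structure DegreeBlocks (E : g → g) where
  (ll lm ln ml mm mn nl nm nn y : ℤ → ℂ)
  apply_L : ∀ n, E (h.b (L n)) = ll n • h.b (L n) + lm n • h.b (M n) + ln n • h.b (N n)
  apply_M : ∀ n, E (h.b (M n)) = ml n • h.b (L n) + mm n • h.b (M n) + mn n • h.b (N n)
  apply_N : ∀ n, E (h.b (N n)) = nl n • h.b (L n) + nm n • h.b (M n) + nn n • h.b (N n)
  apply_Y : ∀ n, E (h.b (Y n)) = y n • h.b (Y n)

variable {h} in
noncomputable def degreeBlocks {E : LieDerivation ℂ g g} (hE : E (h.b (L 0)) = 0) :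
    h.DegreeBlocks E where
  ll n := h.b.repr (E (h.b (L n))) (L n)
  lm n := h.b.repr (E (h.b (L n))) (M n)
  ln n := h.b.repr (E (h.b (L n))) (N n)
  ml n := h.b.repr (E (h.b (M n))) (L n)
  mm n := h.b.repr (E (h.b (M n))) (M n)
  mn n := h.b.repr (E (h.b (M n))) (N n)
  nl n := h.b.repr (E (h.b (N n))) (L n)
  nm n := h.b.repr (E (h.b (N n))) (M n)
  nn n := h.b.repr (E (h.b (N n))) (N n)
  y n := h.b.repr (E (h.b (Y n))) (Y n)
  apply_L _ := h.derivation_apply_eq_of_twiceDeg_eq_even hE rfl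
  apply_M _ := h.derivation_apply_eq_of_twiceDeg_eq_even hE rfl
  apply_N _ := h.derivation_apply_eq_of_twiceDeg_eq_even hE rfl
  apply_Y := h.derivation_apply_Y hE

end ExtSV

namespace ExtSV.DegreeBlocks

open SVIdx

variable {g : Type*} [LieRing g] [LieAlgebra ℂ g] {h : ExtSV g} {E : LieDerivation ℂ g g}
  (F : h.DegreeBlocks E)

theorem ml_eq_zero (k : ℤ) : F.ml k = 0 := by
  have e := congrArg (fun v => h.b.repr v (L k))
    (E.apply_lie_eq_add (h.b (N k)) (h.b (M 0)))
  simpa [F.apply_M, F.apply_N, lie_add, add_lie] using e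

theorem mn_eq_zero (k : ℤ) : F.mn k = 0 := by
  have e := congrArg (fun v => h.b.repr v (N k))
    (E.apply_lie_eq_add (h.b (N 0)) (h.b (M k)))
  simpa [F.apply_M, F.apply_N, lie_add, add_lie] using e

theorem nm_eq (k : ℤ) : F.nm k = F.nm 0 := by
  have e := congrArg (fun v => h.b.repr v (M k))
    (E.apply_lie_eq_add (h.b (N k)) (h.b (N 0)))
  simp [F.apply_N, lie_add, add_lie] at e
  linear_combination e / 2

theorem lm_eq_zero (k : ℤ) : F.lm k = 0 := by
  have e := congrArg (fun v => h.b.repr v (M (k + 1)))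
    (E.apply_lie_eq_add (h.b (L k)) (h.b (N 1)))
  simp [F.apply_L, F.apply_N, lie_add, add_lie] at e
  linear_combination (e - F.nm_eq (k + 1) + F.nm_eq 1) / 2

theorem nl_eq (k : ℤ) : F.nl k = k * F.nl 1 := by
  have e := congrArg (fun v => h.b.repr v (N (k + 1)))
    (E.apply_lie_eq_add (h.b (N k)) (h.b (N 1)))
  simp [F.apply_N, lie_add, add_lie] at e
  linear_combination -e

theorem nl_eq_zero (k : ℤ) : F.nl k = 0 := by
  have e := congrArg (fun v => h.b.repr v (L 2))
    (E.apply_lie_eq_add (h.b (L 1)) (h.b (N 1)))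
  simp [F.apply_L, F.apply_N, lie_add, add_lie] at e
  have h1 : F.nl 1 = 0 := by linear_combination (e - F.nl_eq 2) / 2
  rw [F.nl_eq, h1, mul_zero]

theorem y_add_eq_nn (m n : ℤ) : F.y (m + n) = F.y n + F.nn m := by
  have e := congrArg (fun v => h.b.repr v (Y (m + n)))
    (E.apply_lie_eq_add (h.b (N m)) (h.b (Y n)))
  simpa [F.apply_N, F.apply_Y, lie_add, add_lie, F.nl_eq_zero] using e

theorem ln_eq (m n : ℤ) : F.ln m = ((n : ℂ) + (1 - m) / 2) * (F.nn m - F.ll m) := by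
  have e := congrArg (fun v => h.b.repr v (Y (m + n)))
    (E.apply_lie_eq_add (h.b (L m)) (h.b (Y n)))
  simp [F.apply_L, F.apply_Y, add_lie, F.y_add_eq_nn] at e
  linear_combination -e

theorem mm_eq_nn (k : ℤ) : F.mm k = F.mm 0 + F.nn k := by
  have e := congrArg (fun v => h.b.repr v (M k))
    (E.apply_lie_eq_add (h.b (N k)) (h.b (M 0)))
  simp [F.apply_M, F.apply_N, add_lie] at e
  linear_combination e / 2

theorem nn_eq_ll (m : ℤ) : F.nn m = F.ll m := by
  linear_combination F.ln_eq m 0 - F.ln_eq m 1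

theorem ln_eq_zero (m : ℤ) : F.ln m = 0 := by
  rw [F.ln_eq m 0, F.nn_eq_ll, sub_self, mul_zero]

theorem y_add (m n : ℤ) : F.y (m + n) = F.y n + F.ll m := by
  rw [F.y_add_eq_nn, F.nn_eq_ll]

theorem y_eq_ll (k : ℤ) : F.y k = F.y 0 + F.ll k := by
  simpa using F.y_add k 0

theorem ll_add (m n : ℤ) : F.ll (m + n) = F.ll m + F.ll n := by
  linear_combination F.y_add m n - F.y_eq_ll (m + n) + F.y_eq_ll n

theorem ll_eq (k : ℤ) : F.ll k = k * F.ll 1 := by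
  have hk := map_zsmul (AddMonoidHom.mk' F.ll F.ll_add) k 1
  rwa [smul_eq_mul, mul_one, AddMonoidHom.mk'_apply, zsmul_eq_mul] at hk

theorem y_eq (k : ℤ) : F.y k = F.y 0 + k * F.ll 1 := by
  rw [F.y_eq_ll, F.ll_eq]

theorem mm_eq (k : ℤ) : F.mm k = F.mm 0 + k * F.ll 1 := by
  rw [F.mm_eq_nn, F.nn_eq_ll, F.ll_eq]

theorem two_mul_y_zero : 2 * F.y 0 = F.mm 0 + F.ll 1 := by
  have e := congrArg (fun v => h.b.repr v (M 2))
    (E.apply_lie_eq_add (h.b (Y 1)) (h.b (Y 0)))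
  simp [F.apply_M, F.apply_Y] at e
  linear_combination -e - F.y_eq 1 + F.mm_eq 2

theorem apply_eq_lie (x : g) :
    E x = ⁅F.ll 1 • h.b (L 0) - (F.nm 0 / 2) • h.b (M 0) + (F.mm 0 / 2) • h.b (N 0), x⁆ := by
  have hE : (E : g →ₗ[ℂ] g) = LieAlgebra.ad ℂ g
      (F.ll 1 • h.b (L 0) - (F.nm 0 / 2) • h.b (M 0) + (F.mm 0 / 2) • h.b (N 0)) := by
    refine h.b.ext fun i => ?_
    rw [LieDerivation.coeFn_coe, LieAlgebra.ad_apply]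
    cases i with
    | L n =>
      rw [F.apply_L, F.lm_eq_zero, F.ln_eq_zero, F.ll_eq n]
      simp only [add_lie, sub_lie, smul_lie, LL, ML, NL, zero_add]
      module
    | M n =>
      rw [F.apply_M, F.ml_eq_zero, F.mn_eq_zero, F.mm_eq n]
      simp only [add_lie, sub_lie, smul_lie, LM, MM, NM, zero_add]
      module
    | N n =>
      rw [F.apply_N, F.nl_eq_zero, F.nm_eq n, F.nn_eq_ll, F.ll_eq n]
      simp only [add_lie, sub_lie, smul_lie, LN, MN, NN, zero_add]
      module
    | Y n =>
      rw [F.apply_Y, F.y_eq n]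
      simp only [add_lie, sub_lie, smul_lie, LY, MY, NY, zero_add]
      linear_combination (norm := module) (F.two_mul_y_zero / 2) • h.b (Y n)
  exact LinearMap.congr_fun hE x

end ExtSV.DegreeBlocks

open SVIdx in
/-- Every derivation of `sv~` is inner, i.e. `H¹(sv~, sv~) = 0`. -/
theorem extSV_derivations_inner {g : Type*} [LieRing g] [LieAlgebra ℂ g] (h : ExtSV g) :
    ∀ D : LieDerivation ℂ g g, ∃ z : g, ∀ x : g, D x = ⁅z, x⁆ := by
  intro D
  obtain ⟨w, hw⟩ := h.b.exists_repr_lie_eq_of_lie_eq_smul h.lie_L_zero (D (h.b (L 0)))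
  set E := D - LieDerivation.inner ℂ g g w
  have hE : E (h.b (L 0)) = 0 := h.derivation_apply_L_zero_eq_zero E fun j hj => by
    simp [E, hw j hj]
  obtain ⟨z, hz⟩ : ∃ z, ∀ x, E x = ⁅z, x⁆ := ⟨_, (ExtSV.degreeBlocks hE).apply_eq_lie⟩
  refine ⟨z - w, fun x => ?_⟩
  have hD : D x = E x + ⁅x, w⁆ := by simp [E]
  rw [hD, hz, sub_lie, sub_eq_add_neg, lie_skew]
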